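/- arXiv:2111.14216 — 6 statements merged into one kernel-verified Lean document; each statement's English description precedes it below -/
import Mathlib

section
/- Let d, m, n₀, n₁, …, n_d be natural numbers with n = n₀ + n₁ + ⋯ + n_d, and let H = [[A₁₁(z), A₁₂(z)], [A₂₁(z), A₂₂(z)]] = H₀ + z₁A₁ + ⋯ + z_dA_d be an (m+n)×(m+n) matrix pencil where H₀ satisfies (H₀ − H₀*)/(2i) ⪰ 0 and A₁, …, A_d are positive semidefinite, the upper-left block being m×m. If the lower-right block A₂₂(z) is invertible for every z ∈ Π^d, then f(z) = A₁₁(z) − A₁₂(z)A₂₂(z)⁻¹A₂₁(z) belongs to the Pick class 𝒫_d^{m×m}; indeed for all z, ζ where the inverses exist, (f(z) − f(ζ)*)/(2i) = (I_m, −A₂₁(ζ)*A₂₂(ζ)⁻¹*) · (H₀ − H₀*)/(2i) · (I_m; −A₂₂(z)⁻¹A₂₁(z)) + Σ_{k=1}^d (z_k − ζ̄_k)/(2i) · (I_m, −A₂₁(ζ)*A₂₂(ζ)⁻¹*) · A_k · (I_m; −A₂₂(z)⁻¹A₂₁(z)). -/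
/-! Put `X(z) = (I; -A₂₂(z)⁻¹ A₂₁(z))`. Then `H(z) X(z) = (f(z); 0)`, so `X(ζ)* H(z) X(z) = f(z)`
and `X(ζ)* H(ζ)* X(z) = f(ζ)*`; subtracting gives `f(z) - f(ζ)* = X(ζ)* (H(z) - H(ζ)*) X(z)`, and
`H(z) - H(ζ)* = (H₀ - H₀*) + Σ (z_k - ζ̄_k) A_k` because the `A_k` are Hermitian. For `ζ = z` the
coefficients `(z_k - z̄_k)/(2i) = Im z_k` are positive on `Π^d`, whence `Im f(z) ⪰ 0`. Holomorphy
of `f` comes from that of matrix inversion on invertible matrices. -/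

open Matrix MvPolynomial
open scoped ComplexOrder

noncomputable section

/-- The open upper poly-half-plane `Π^d` (coordinates indexed by `ι`). -/
def UHP (ι : Type*) : Set (ι → ℂ) := {z | ∀ k, 0 < (z k).im}

/-- `(M - Mᴴ)/(2i)`. -/
def imPart {n : Type*} (M : Matrix n n ℂ) : Matrix n n ℂ :=
  (2 * Complex.I)⁻¹ • (M - Mᴴ)

/-- The linear matrix pencil `H₀ + z₁ A₁ + ⋯ + z_d A_d`. -/
def pencil {d m n : ℕ} (H0 : Matrix (Fin m ⊕ Fin n) (Fin m ⊕ Fin n) ℂ)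
    (A : Fin d → Matrix (Fin m ⊕ Fin n) (Fin m ⊕ Fin n) ℂ) (z : Fin d → ℂ) :
    Matrix (Fin m ⊕ Fin n) (Fin m ⊕ Fin n) ℂ :=
  H0 + ∑ k, z k • A k

/-- The block column `(I_m ; -A₂₂(z)⁻¹ A₂₁(z))`. -/
def pencilCol {d m n : ℕ} (H0 : Matrix (Fin m ⊕ Fin n) (Fin m ⊕ Fin n) ℂ)
    (A : Fin d → Matrix (Fin m ⊕ Fin n) (Fin m ⊕ Fin n) ℂ) (z : Fin d → ℂ) :
    Matrix (Fin m ⊕ Fin n) (Fin m) ℂ :=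
  Matrix.fromRows (1 : Matrix (Fin m) (Fin m) ℂ)
    (-(((pencil H0 A z).toBlocks₂₂)⁻¹ * (pencil H0 A z).toBlocks₂₁))

namespace Matrix

variable {m n l α : Type*} [Fintype m] [Fintype n] [DecidableEq m]

section Star

variable [Semiring α] [StarRing α]

lemma conjTranspose_fromRows_one_mul_fromRows_zero (Y : Matrix n m α) (S : Matrix m l α) :
    (fromRows (1 : Matrix m m α) Y)ᴴ * fromRows S (0 : Matrix n l α) = S := by
  rw [conjTranspose_fromRows_eq_fromCols_conjTranspose, fromCols_mul_fromRows]
  simp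

lemma conjTranspose_fromRows_zero_mul_fromRows_one (S : Matrix m l α) (Y : Matrix n m α) :
    (fromRows S (0 : Matrix n l α))ᴴ * fromRows (1 : Matrix m m α) Y = Sᴴ := by
  simpa using congrArg conjTranspose (conjTranspose_fromRows_one_mul_fromRows_zero Y S)

end Star

variable [DecidableEq n] [CommRing α]

def schurComplement (M : Matrix (m ⊕ n) (m ⊕ n) α) : Matrix m m α :=
  M.toBlocks₁₁ - M.toBlocks₁₂ * M.toBlocks₂₂⁻¹ * M.toBlocks₂₁

def schurColumn (M : Matrix (m ⊕ n) (m ⊕ n) α) : Matrix (m ⊕ n) m α :=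
  fromRows 1 (-(M.toBlocks₂₂⁻¹ * M.toBlocks₂₁))

lemma mul_schurColumn {M : Matrix (m ⊕ n) (m ⊕ n) α} (hM : IsUnit M.toBlocks₂₂) :
    M * M.schurColumn = fromRows M.schurComplement 0 := by
  nth_rw 1 [← fromBlocks_toBlocks M]
  rw [schurColumn, fromBlocks_mul_fromRows]
  simp only [Matrix.mul_one, Matrix.mul_neg, ← Matrix.mul_assoc,
    mul_nonsing_inv _ ((isUnit_iff_isUnit_det _).mp hM), Matrix.one_mul, add_neg_cancel,
    ← sub_eq_add_neg, schurComplement]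

lemma schurComplement_sub_conjTranspose [StarRing α] {M N : Matrix (m ⊕ n) (m ⊕ n) α}
    (hM : IsUnit M.toBlocks₂₂) (hN : IsUnit N.toBlocks₂₂) :
    M.schurComplement - N.schurComplementᴴ = N.schurColumnᴴ * (M - Nᴴ) * M.schurColumn := by
  rw [Matrix.mul_sub, Matrix.sub_mul, Matrix.mul_assoc, mul_schurColumn hM, ← conjTranspose_mul,
    mul_schurColumn hN, schurColumn, schurColumn, conjTranspose_fromRows_one_mul_fromRows_zero,
    conjTranspose_fromRows_zero_mul_fromRows_one]

end Matrix

section Differentiability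

variable {E : Type*} [NormedAddCommGroup E] [NormedSpace ℂ E] {s : Set E}
  {l m n : Type*}

lemma DifferentiableOn.matrix_mul_apply [Fintype m] {M : E → Matrix l m ℂ} {N : E → Matrix m n ℂ}
    (hM : ∀ i j, DifferentiableOn ℂ (fun z => M z i j) s)
    (hN : ∀ i j, DifferentiableOn ℂ (fun z => N z i j) s) (i : l) (j : n) :
    DifferentiableOn ℂ (fun z => (M z * N z) i j) s := by
  simp only [Matrix.mul_apply]
  exact DifferentiableOn.fun_sum fun k _ => (hM i k).mul (hN k j)

lemma DifferentiableOn.matrix_inv_apply [Fintype m] [DecidableEq m] {M : E → Matrix m m ℂ}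
    (hM : ∀ i j, DifferentiableOn ℂ (fun z => M z i j) s) (hunit : ∀ z ∈ s, IsUnit (M z))
    (i j : m) : DifferentiableOn ℂ (fun z => (M z)⁻¹ i j) s := by
  -- Any norm would do; the ℓ∞ operator norm makes `Matrix m m ℂ` a normed algebra, where
  -- inversion is differentiable at units.
  let _ : NormedRing (Matrix m m ℂ) := Matrix.linftyOpNormedRing
  let _ : NormedAlgebra ℂ (Matrix m m ℂ) := Matrix.linftyOpNormedAlgebra
  have hMat : DifferentiableOn ℂ M s := by
    have hsum : M = fun z => ∑ a, ∑ b, M z a b • Matrix.single a b (1 : ℂ) := by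
      funext z
      conv_lhs => rw [Matrix.matrix_eq_sum_single (M z)]
      simp [Matrix.smul_single]
    rw [hsum]
    exact DifferentiableOn.fun_sum fun a _ => DifferentiableOn.fun_sum fun b _ =>
      (hM a b).smul_const _
  simp only [Matrix.nonsing_inv_eq_ringInverse]
  exact (Matrix.entryLinearMap ℂ ℂ i j).toContinuousLinearMap.differentiable.comp_differentiableOn
    (hMat.inverse hunit)

lemma DifferentiableOn.schurComplement_apply [Fintype n] [DecidableEq n]
    {M : E → Matrix (m ⊕ n) (m ⊕ n) ℂ} (hM : ∀ a b, DifferentiableOn ℂ (fun z => M z a b) s)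
    (hunit : ∀ z ∈ s, IsUnit (M z).toBlocks₂₂) (i j : m) :
    DifferentiableOn ℂ (fun z => (M z).schurComplement i j) s := by
  have h₁₂ : ∀ a b, DifferentiableOn ℂ (fun z => (M z).toBlocks₁₂ a b) s :=
    fun a b => hM (.inl a) (.inr b)
  have h₂₁ : ∀ a b, DifferentiableOn ℂ (fun z => (M z).toBlocks₂₁ a b) s :=
    fun a b => hM (.inr a) (.inl b)
  have h₂₂ : ∀ a b, DifferentiableOn ℂ (fun z => (M z).toBlocks₂₂ a b) s :=
    fun a b => hM (.inr a) (.inr b)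
  simp only [Matrix.schurComplement, Matrix.sub_apply]
  exact (hM (.inl i) (.inl j)).sub <| DifferentiableOn.matrix_mul_apply
    (DifferentiableOn.matrix_mul_apply h₁₂ (DifferentiableOn.matrix_inv_apply h₂₂ hunit)) h₂₁ i j

end Differentiability

section Pencil

variable {d m n : ℕ} (H0 : Matrix (Fin m ⊕ Fin n) (Fin m ⊕ Fin n) ℂ)
  (A : Fin d → Matrix (Fin m ⊕ Fin n) (Fin m ⊕ Fin n) ℂ)

lemma differentiable_pencil_apply (a b : Fin m ⊕ Fin n) :
    Differentiable ℂ (fun z => pencil H0 A z a b) := by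
  simp only [pencil, Matrix.add_apply, Matrix.sum_apply, Matrix.smul_apply, smul_eq_mul]
  fun_prop

lemma pencilCol_eq_schurColumn (z : Fin d → ℂ) :
    pencilCol H0 A z = (pencil H0 A z).schurColumn :=
  rfl

variable {H0 A}

lemma pencil_sub_conjTranspose (hA : ∀ k, (A k).IsHermitian) (z ζ : Fin d → ℂ) :
    pencil H0 A z - (pencil H0 A ζ)ᴴ =
      (H0 - H0ᴴ) + ∑ k, (z k - starRingEnd ℂ (ζ k)) • A k := by
  simp only [pencil, conjTranspose_add, conjTranspose_sum, conjTranspose_smul, fun k => (hA k).eq,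
    Complex.star_def, sub_smul, Finset.sum_sub_distrib]
  abel

lemma pencil_schurComplement_two_point (hA : ∀ k, (A k).IsHermitian) {z ζ : Fin d → ℂ}
    (hz : IsUnit (pencil H0 A z).toBlocks₂₂) (hζ : IsUnit (pencil H0 A ζ).toBlocks₂₂) :
    (2 * Complex.I)⁻¹ •
        ((pencil H0 A z).schurComplement - (pencil H0 A ζ).schurComplementᴴ) =
      (pencilCol H0 A ζ)ᴴ * imPart H0 * pencilCol H0 A z +
        ∑ k, ((z k - starRingEnd ℂ (ζ k)) / (2 * Complex.I)) •
          ((pencilCol H0 A ζ)ᴴ * A k * pencilCol H0 A z) := by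
  rw [schurComplement_sub_conjTranspose hz hζ, pencil_sub_conjTranspose hA,
    ← pencilCol_eq_schurColumn, ← pencilCol_eq_schurColumn, imPart]
  simp only [Matrix.mul_add, Matrix.add_mul, Matrix.mul_sum, Matrix.sum_mul, Matrix.mul_smul,
    Matrix.smul_mul, smul_add, Finset.smul_sum, smul_smul, div_eq_inv_mul]

lemma posSemidef_imPart_pencil_schurComplement (hH0 : (imPart H0).PosSemidef)
    (hA : ∀ k, (A k).PosSemidef) {z : Fin d → ℂ} (hz : z ∈ UHP (Fin d))
    (hunit : IsUnit (pencil H0 A z).toBlocks₂₂) :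
    (imPart (pencil H0 A z).schurComplement).PosSemidef := by
  rw [imPart, pencil_schurComplement_two_point (fun k => (hA k).isHermitian) hunit hunit]
  refine (hH0.conjTranspose_mul_mul_same _).add (posSemidef_sum _ fun k _ => ?_)
  rw [← Complex.im_eq_sub_conj]
  exact (hA k).conjTranspose_mul_mul_same _ |>.smul (Complex.zero_le_real.mpr (hz k).le)

end Pencil

/-- a linear pencil with `(H₀-H₀*)/(2i) ⪰ 0` and `A_k ⪰ 0`, whose lower
right block is invertible on the upper poly-half-plane, produces via the Schur
complement a function of the Pick class, together with the two-point identity. -/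
theorem pick_from_long_resolvent (d m n : ℕ)
    (H0 : Matrix (Fin m ⊕ Fin n) (Fin m ⊕ Fin n) ℂ)
    (A : Fin d → Matrix (Fin m ⊕ Fin n) (Fin m ⊕ Fin n) ℂ)
    (hH0 : (imPart H0).PosSemidef)
    (hA : ∀ k, (A k).PosSemidef)
    (hinv : ∀ z ∈ UHP (Fin d), IsUnit ((pencil H0 A z).toBlocks₂₂))
    (f : (Fin d → ℂ) → Matrix (Fin m) (Fin m) ℂ)
    (hf : ∀ z, f z = (pencil H0 A z).toBlocks₁₁ -
      (pencil H0 A z).toBlocks₁₂ * ((pencil H0 A z).toBlocks₂₂)⁻¹ * (pencil H0 A z).toBlocks₂₁) :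
    (∀ i j, DifferentiableOn ℂ (fun z => f z i j) (UHP (Fin d))) ∧
    (∀ z ∈ UHP (Fin d), (imPart (f z)).PosSemidef) ∧
    (∀ z ζ : Fin d → ℂ, IsUnit ((pencil H0 A z).toBlocks₂₂) →
      IsUnit ((pencil H0 A ζ).toBlocks₂₂) →
      (2 * Complex.I)⁻¹ • (f z - (f ζ)ᴴ) =
        (pencilCol H0 A ζ)ᴴ * imPart H0 * pencilCol H0 A z +
          ∑ k, ((z k - (starRingEnd ℂ) (ζ k)) / (2 * Complex.I)) •
            ((pencilCol H0 A ζ)ᴴ * A k * pencilCol H0 A z)) := by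
  obtain rfl : f = fun z => (pencil H0 A z).schurComplement := funext hf
  exact ⟨fun i j => DifferentiableOn.schurComplement_apply
      (fun a b => (differentiable_pencil_apply H0 A a b).differentiableOn) hinv i j,
    fun z hz => posSemidef_imPart_pencil_schurComplement hH0 hA hz (hinv z hz),
    fun z ζ hz hζ => pencil_schurComplement_two_point (fun k => (hA k).isHermitian) hz hζ⟩
end
end

section
/- Let H = [[A, B], [C, D]] be a constant block (m+n)×(m+n) matrix with (H − H*)/(2i) ⪰ 0 and D of size n×n, and let Z_n = diag(I_{n₀}, z₁I_{n₁}, …, z_dI_{n_d}) with n₀ + n₁ + ⋯ + n_d = n. If I_n − DZ_n is invertible for every z ∈ Π^d, then f(z) = A + BZ_n(I_n − DZ_n)⁻¹C belongs to the Pick class 𝒫_d^{m×m}; indeed (f(z) − f(z)*)/(2i) = (I_m, −C*(D − Z_n⁻¹)⁻¹*) · (H − H*)/(2i) · (I_m; −(D − Z_n⁻¹)⁻¹C) + C*(I − DZ_n)⁻¹* · (Z_n − Z_n*)/(2i) · (I − DZ_n)⁻¹C whenever all inverses exist. -/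
/-!
Put `y = (I - D Z)⁻¹ C` and `x = (I; Z y)`. Since `y = C + D Z y`, the realisation satisfies
`H x = (f; y)`, so `xᴴ H x = f + yᴴ Zᴴ y`; taking imaginary parts gives
`Im f = xᴴ (Im H) x + yᴴ (Im Z) y`, a sum of two positive semidefinite matrices when
`Im H ⪰ 0` and `z ∈ Π^d`. When `Z` and `D - Z⁻¹` are invertible, `Z y = -(D - Z⁻¹)⁻¹ C`.
Holomorphy follows from Cramer's rule.
-/

open Matrix MvPolynomial
open scoped ComplexOrder

noncomputable section

/-- Index type realizing `n = n₀ + n₁ + ⋯ + n_d`. -/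
abbrev ZIdx {d : ℕ} (n : Fin (d + 1) → ℕ) : Type := (k : Fin (d + 1)) × Fin (n k)

/-- `Z_n = diag(I_{n₀}, z₁ I_{n₁}, …, z_d I_{n_d})`. -/
def ZOne {d : ℕ} (n : Fin (d + 1) → ℕ) (z : Fin d → ℂ) : Matrix (ZIdx n) (ZIdx n) ℂ :=
  Matrix.diagonal fun p => Fin.cases (1 : ℂ) (fun j => z j) p.1

section Differentiability

variable {𝕜 E : Type*} [NontriviallyNormedField 𝕜] [NormedAddCommGroup E] [NormedSpace 𝕜 E]
  {s : Set E} {l m n : Type*}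

theorem DifferentiableOn.matrix_mul [Fintype m] {M : E → Matrix l m 𝕜} {N : E → Matrix m n 𝕜}
    (hM : ∀ i j, DifferentiableOn 𝕜 (fun x => M x i j) s)
    (hN : ∀ i j, DifferentiableOn 𝕜 (fun x => N x i j) s) (i : l) (j : n) :
    DifferentiableOn 𝕜 (fun x => (M x * N x) i j) s := by
  simp only [mul_apply]
  exact DifferentiableOn.fun_sum fun k _ => (hM i k).mul (hN k j)

theorem DifferentiableOn.matrix_det [Fintype n] [DecidableEq n] {M : E → Matrix n n 𝕜}
    (hM : ∀ i j, DifferentiableOn 𝕜 (fun x => M x i j) s) :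
    DifferentiableOn 𝕜 (fun x => (M x).det) s := by
  have hprod (σ : Equiv.Perm n) : DifferentiableOn 𝕜 (fun x => ∏ i, M x (σ i) i) s := by
    rw [← Finset.prod_fn]
    exact Finset.prod_induction _ (DifferentiableOn 𝕜 · s) (fun _ _ => DifferentiableOn.mul)
      (differentiableOn_const 1) fun i _ => hM (σ i) i
  simp only [det_apply']
  exact DifferentiableOn.fun_sum fun σ _ => (hprod σ).const_mul _

theorem DifferentiableOn.matrix_adjugate [Fintype n] [DecidableEq n] {M : E → Matrix n n 𝕜}
    (hM : ∀ i j, DifferentiableOn 𝕜 (fun x => M x i j) s) (i j : n) :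
    DifferentiableOn 𝕜 (fun x => (M x).adjugate i j) s := by
  simp only [adjugate_apply]
  refine DifferentiableOn.matrix_det fun p q => ?_
  by_cases hp : p = j
  · simpa only [updateRow_apply, hp, if_true] using differentiableOn_const _
  · simpa only [updateRow_apply, hp, if_false] using hM p q

theorem DifferentiableOn.matrix_inv [Fintype n] [DecidableEq n] {M : E → Matrix n n 𝕜}
    (hM : ∀ i j, DifferentiableOn 𝕜 (fun x => M x i j) s) (hunit : ∀ x ∈ s, IsUnit (M x))
    (i j : n) : DifferentiableOn 𝕜 (fun x => (M x)⁻¹ i j) s := by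
  simp only [inv_def, Matrix.smul_apply, Ring.inverse_eq_inv, smul_eq_mul]
  exact ((DifferentiableOn.matrix_det hM).inv fun x hx =>
    ((isUnit_iff_isUnit_det _).mp (hunit x hx)).ne_zero).mul
    (DifferentiableOn.matrix_adjugate hM i j)

theorem differentiableOn_transfer_apply [Fintype m] [DecidableEq m] (A : Matrix l l 𝕜)
    (B : Matrix l m 𝕜) (C : Matrix m l 𝕜) (D : Matrix m m 𝕜) {Z : E → Matrix m m 𝕜}
    (hZ : ∀ p q, DifferentiableOn 𝕜 (fun x => Z x p q) s)
    (hunit : ∀ x ∈ s, IsUnit (1 - D * Z x)) (i j : l) :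
    DifferentiableOn 𝕜 (fun x => (A + B * Z x * (1 - D * Z x)⁻¹ * C) i j) s := by
  have hG (p q : m) : DifferentiableOn 𝕜 (fun x => (1 - D * Z x) p q) s := by
    simp only [Matrix.sub_apply]
    exact (differentiableOn_const _).sub
      (DifferentiableOn.matrix_mul (M := fun _ => D) (fun _ _ => differentiableOn_const _) hZ p q)
  have hBZG := DifferentiableOn.matrix_mul (DifferentiableOn.matrix_mul (M := fun _ => B)
    (fun _ _ => differentiableOn_const _) hZ) (DifferentiableOn.matrix_inv hG hunit)
  simp only [Matrix.add_apply]
  exact (differentiableOn_const _).add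
    (DifferentiableOn.matrix_mul (N := fun _ => C) hBZG (fun _ _ => differentiableOn_const _) i j)

end Differentiability

section ImaginaryPart

variable {m n : Type*}

theorem imPart_add (M N : Matrix n n ℂ) : imPart (M + N) = imPart M + imPart N := by
  simp only [imPart, conjTranspose_add, add_sub_add_comm, smul_add]

theorem imPart_conjTranspose (M : Matrix n n ℂ) : imPart Mᴴ = -imPart M := by
  simp only [imPart, conjTranspose_conjTranspose, ← smul_neg, neg_sub]

theorem imPart_conjTranspose_mul_mul [Fintype n] (P : Matrix n m ℂ) (M : Matrix n n ℂ) :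
    imPart (Pᴴ * M * P) = Pᴴ * imPart M * P := by
  simp only [imPart, conjTranspose_mul, conjTranspose_conjTranspose, Matrix.mul_smul,
    Matrix.smul_mul, Matrix.mul_sub, Matrix.sub_mul, Matrix.mul_assoc]

theorem imPart_diagonal [DecidableEq n] (v : n → ℂ) :
    imPart (diagonal v) = diagonal fun i => ((v i).im : ℂ) := by
  ext i j
  by_cases h : i = j
  · subst h
    simp only [imPart, Matrix.smul_apply, Matrix.sub_apply, conjTranspose_apply, diagonal_apply_eq,
      smul_eq_mul, Complex.star_def, Complex.sub_conj]
    push_cast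
    field_simp [Complex.I_ne_zero]
  · simp [imPart, diagonal_apply_ne _ h]

theorem imPart_eq_of_mul_fromRows [Fintype m] [Fintype n] [DecidableEq m]
    {H : Matrix (m ⊕ n) (m ⊕ n) ℂ} {Z : Matrix n n ℂ} {F : Matrix m m ℂ} {Y : Matrix n m ℂ}
    (hHx : H * fromRows (1 : Matrix m m ℂ) (Z * Y) = fromRows F Y) :
    imPart F = (fromRows (1 : Matrix m m ℂ) (Z * Y))ᴴ * imPart H * fromRows 1 (Z * Y) +
      Yᴴ * imPart Z * Y := by
  set x := fromRows (1 : Matrix m m ℂ) (Z * Y)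
  have hxHx : xᴴ * H * x = F + Yᴴ * Zᴴ * Y := by
    rw [Matrix.mul_assoc, hHx, conjTranspose_fromRows_eq_fromCols_conjTranspose,
      fromCols_mul_fromRows, conjTranspose_one, Matrix.one_mul, conjTranspose_mul,
      Matrix.mul_assoc]
  calc imPart F = imPart (xᴴ * H * x) - imPart (Yᴴ * Zᴴ * Y) := by
        rw [hxHx, imPart_add, add_sub_cancel_right]
    _ = xᴴ * imPart H * x + Yᴴ * imPart Z * Y := by
        rw [imPart_conjTranspose_mul_mul, imPart_conjTranspose_mul_mul, imPart_conjTranspose,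
          Matrix.mul_neg, Matrix.neg_mul, sub_neg_eq_add]

end ImaginaryPart

section Transfer

variable {α : Type*} [CommRing α] {m n : Type*} [Fintype n] [DecidableEq n]

theorem mul_inv_one_sub_mul {D Z : Matrix n n α} (hZ : IsUnit Z) (hDZ : IsUnit (D - Z⁻¹)) :
    Z * (1 - D * Z)⁻¹ = -(D - Z⁻¹)⁻¹ := by
  have hZ' := (isUnit_iff_isUnit_det Z).mp hZ
  have hG : (1 - D * Z)⁻¹ = -(Z⁻¹ * (D - Z⁻¹)⁻¹) := inv_eq_right_inv <| by
    rw [Matrix.mul_neg, Matrix.sub_mul, Matrix.one_mul, Matrix.mul_assoc,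
      mul_nonsing_inv_cancel_left _ _ hZ', neg_sub, ← Matrix.sub_mul,
      mul_nonsing_inv _ ((isUnit_iff_isUnit_det _).mp hDZ)]
  rw [hG, Matrix.mul_neg, mul_nonsing_inv_cancel_left _ _ hZ']

theorem fromBlocks_mul_fromRows_eq_transfer [Fintype m] [DecidableEq m] (A : Matrix m m α)
    (B : Matrix m n α) (C : Matrix n m α) (D Z : Matrix n n α) (hunit : IsUnit (1 - D * Z)) :
    fromBlocks A B C D * fromRows (1 : Matrix m m α) (Z * ((1 - D * Z)⁻¹ * C)) =
      fromRows (A + B * Z * (1 - D * Z)⁻¹ * C) ((1 - D * Z)⁻¹ * C) := by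
  have hG : (1 - D * Z) * (1 - D * Z)⁻¹ = 1 :=
    mul_nonsing_inv _ ((isUnit_iff_isUnit_det _).mp hunit)
  have hy : C + D * (Z * ((1 - D * Z)⁻¹ * C)) = (1 - D * Z)⁻¹ * C := by
    calc C + D * (Z * ((1 - D * Z)⁻¹ * C))
        = C + (D * Z) * (1 - D * Z)⁻¹ * C := by simp only [Matrix.mul_assoc]
      _ = ((1 - D * Z) * (1 - D * Z)⁻¹ + (D * Z) * (1 - D * Z)⁻¹) * C := by
        rw [hG, Matrix.add_mul, Matrix.one_mul]
      _ = (1 - D * Z)⁻¹ * C := by rw [← Matrix.add_mul, sub_add_cancel, Matrix.one_mul]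
  rw [fromBlocks_mul_fromRows, Matrix.mul_one, Matrix.mul_one, hy, Matrix.mul_assoc B,
    Matrix.mul_assoc B, Matrix.mul_assoc Z]

end Transfer

section PickClass

variable {m n : Type*} [Fintype m] [DecidableEq m] [Fintype n] [DecidableEq n]

theorem imPart_transfer (A : Matrix m m ℂ) (B : Matrix m n ℂ) (C : Matrix n m ℂ)
    (D Z : Matrix n n ℂ) (hunit : IsUnit (1 - D * Z)) :
    imPart (A + B * Z * (1 - D * Z)⁻¹ * C) =
      (fromRows (1 : Matrix m m ℂ) (Z * (1 - D * Z)⁻¹ * C))ᴴ * imPart (fromBlocks A B C D) *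
          fromRows 1 (Z * (1 - D * Z)⁻¹ * C) +
        Cᴴ * ((1 - D * Z)⁻¹)ᴴ * imPart Z * (1 - D * Z)⁻¹ * C := by
  rw [imPart_eq_of_mul_fromRows (fromBlocks_mul_fromRows_eq_transfer A B C D Z hunit)]
  simp only [conjTranspose_mul, Matrix.mul_assoc]

theorem posSemidef_imPart_transfer {A : Matrix m m ℂ} {B : Matrix m n ℂ} {C : Matrix n m ℂ}
    {D Z : Matrix n n ℂ} (hH : (imPart (fromBlocks A B C D)).PosSemidef)
    (hZ : (imPart Z).PosSemidef) (hunit : IsUnit (1 - D * Z)) :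
    (imPart (A + B * Z * (1 - D * Z)⁻¹ * C)).PosSemidef := by
  rw [imPart_transfer A B C D Z hunit]
  refine (hH.conjTranspose_mul_mul_same _).add ?_
  simpa only [conjTranspose_mul, Matrix.mul_assoc] using
    hZ.conjTranspose_mul_mul_same ((1 - D * Z)⁻¹ * C)

end PickClass

theorem differentiable_ZOne_apply {d : ℕ} (n : Fin (d + 1) → ℕ) (p q : ZIdx n) :
    Differentiable ℂ fun z => ZOne n z p q := by
  rcases eq_or_ne p q with rfl | hpq
  · obtain ⟨k, i⟩ := p
    cases k using Fin.cases with
    | zero => simp [ZOne]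
    | succ j => simpa [ZOne] using differentiable_apply (𝕜 := ℂ) j
  · simp [ZOne, diagonal_apply_ne _ hpq]

theorem posSemidef_imPart_ZOne {d : ℕ} (n : Fin (d + 1) → ℕ) {z : Fin d → ℂ}
    (hz : ∀ k, 0 ≤ (z k).im) : (imPart (ZOne n z)).PosSemidef := by
  rw [ZOne, imPart_diagonal, posSemidef_diagonal_iff]
  rintro ⟨k, i⟩
  cases k using Fin.cases with
  | zero => simp
  | succ j => simpa using hz j

/-- the transfer-function realisation
`f(z) = A + B Z_n (I - D Z_n)⁻¹ C` with `(H-H*)/(2i) ⪰ 0` belongs to the Pick class,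
together with the identity for `(f(z)-f(z)*)/(2i)`. -/
theorem pick_from_transfer_realization (d m : ℕ) (n : Fin (d + 1) → ℕ)
    (H : Matrix (Fin m ⊕ ZIdx n) (Fin m ⊕ ZIdx n) ℂ)
    (hH : (imPart H).PosSemidef)
    (hinv : ∀ z ∈ UHP (Fin d), IsUnit ((1 : Matrix (ZIdx n) (ZIdx n) ℂ) - H.toBlocks₂₂ * ZOne n z))
    (f : (Fin d → ℂ) → Matrix (Fin m) (Fin m) ℂ)
    (hf : ∀ z, f z = H.toBlocks₁₁ + H.toBlocks₁₂ * ZOne n z *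
      ((1 : Matrix (ZIdx n) (ZIdx n) ℂ) - H.toBlocks₂₂ * ZOne n z)⁻¹ * H.toBlocks₂₁) :
    (∀ i j, DifferentiableOn ℂ (fun z => f z i j) (UHP (Fin d))) ∧
    (∀ z ∈ UHP (Fin d), (imPart (f z)).PosSemidef) ∧
    (∀ z : Fin d → ℂ, IsUnit (ZOne n z) →
      IsUnit ((1 : Matrix (ZIdx n) (ZIdx n) ℂ) - H.toBlocks₂₂ * ZOne n z) →
      IsUnit (H.toBlocks₂₂ - (ZOne n z)⁻¹) →
      (2 * Complex.I)⁻¹ • (f z - (f z)ᴴ) =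
        (Matrix.fromRows (1 : Matrix (Fin m) (Fin m) ℂ)
            (-((H.toBlocks₂₂ - (ZOne n z)⁻¹)⁻¹ * H.toBlocks₂₁)))ᴴ * imPart H *
          Matrix.fromRows (1 : Matrix (Fin m) (Fin m) ℂ)
            (-((H.toBlocks₂₂ - (ZOne n z)⁻¹)⁻¹ * H.toBlocks₂₁)) +
        H.toBlocks₂₁ᴴ * (((1 : Matrix (ZIdx n) (ZIdx n) ℂ) - H.toBlocks₂₂ * ZOne n z)⁻¹)ᴴ *
          ((2 * Complex.I)⁻¹ • (ZOne n z - (ZOne n z)ᴴ)) *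
          ((1 : Matrix (ZIdx n) (ZIdx n) ℂ) - H.toBlocks₂₂ * ZOne n z)⁻¹ * H.toBlocks₂₁) := by
  refine ⟨fun i j => ?_, fun z hz => ?_, fun z hZ hunit hDZ => ?_⟩
  · simp only [hf]
    exact differentiableOn_transfer_apply _ _ _ _
      (fun p q => (differentiable_ZOne_apply n p q).differentiableOn) hinv i j
  · rw [hf]
    exact posSemidef_imPart_transfer (by rwa [fromBlocks_toBlocks])
      (posSemidef_imPart_ZOne n fun k => (hz k).le) (hinv z hz)
  · have h := imPart_transfer H.toBlocks₁₁ H.toBlocks₁₂ H.toBlocks₂₁ H.toBlocks₂₂ _ hunit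
    rw [fromBlocks_toBlocks, mul_inv_one_sub_mul hZ hDZ, Matrix.neg_mul, ← hf] at h
    exact h
end
end

section
/- Let H = H₀ + z₁A₁ + ⋯ + z_dA_d = [[A₁₁(z), A₁₂(z)], [A₂₁(z), A₂₂(z)]] be a matrix pencil with (H₀ − H₀*)/(2i) ⪰ 0 and A_k ⪰ 0 for k = 1,…,d, and suppose A₂₂(z) is invertible for all z ∈ Π^d. Factor (H₀ − H₀*)/(2i) = B₀*B₀ and A_k = B_k*B_k for k = 1,…,d, and define θ_k(z) = B_k · (I_m; −A₂₂(z)⁻¹A₂₁(z)) for k = 0, 1, …, d. Then the function f(z) = A₁₁(z) − A₁₂(z)A₂₂(z)⁻¹A₂₁(z) satisfies the positive-kernel decomposition (f(z) − f(ζ)*)/(2i) = θ₀(ζ)*θ₀(z) + Σ_{k=1}^d (z_k − ζ̄_k)/(2i) · θ_k(ζ)*θ_k(z) for all z, ζ ∈ Π^d. -/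
/-! With `C(w) = (I; -A₂₂(w)⁻¹A₂₁(w))` one has `H(w) C(w) = (f(w); 0)`, so
`f(z) - f(ζ)* = C(ζ)* (H(z) - H(ζ)*) C(z)`. As the `A_k` are Hermitian,
`(H(z) - H(ζ)*)/(2i) = Im H₀ + Σ_k (z_k - ζ̄_k)/(2i) A_k`, and substituting the factorizations
`Im H₀ = B₀*B₀`, `A_k = B_k*B_k` splits the compression into the kernels `θ(ζ)*θ(z)`. -/

open Matrix MvPolynomial
open scoped ComplexOrder

noncomputable section

namespace Matrix

variable {m n α : Type*} [Fintype m] [Fintype n] [DecidableEq m] [DecidableEq n] [CommRing α]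

def schurCompl (M : Matrix (m ⊕ n) (m ⊕ n) α) : Matrix m m α :=
  M.toBlocks₁₁ - M.toBlocks₁₂ * M.toBlocks₂₂⁻¹ * M.toBlocks₂₁

def schurCol (M : Matrix (m ⊕ n) (m ⊕ n) α) : Matrix (m ⊕ n) m α :=
  fromRows 1 (-(M.toBlocks₂₂⁻¹ * M.toBlocks₂₁))

theorem mul_schurCol {M : Matrix (m ⊕ n) (m ⊕ n) α} (hM : IsUnit M.toBlocks₂₂) :
    M * schurCol M = fromRows (schurCompl M) 0 := by
  have hdet : IsUnit M.toBlocks₂₂.det := (isUnit_iff_isUnit_det _).mp hM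
  rw [schurCol]
  nth_rw 1 [← fromBlocks_toBlocks M]
  rw [fromBlocks_mul_fromRows, schurCompl, Matrix.mul_one, Matrix.mul_one,
    Matrix.mul_neg, Matrix.mul_neg, ← Matrix.mul_assoc, ← Matrix.mul_assoc,
    mul_nonsing_inv _ hdet, Matrix.one_mul, add_neg_cancel, ← sub_eq_add_neg]

variable [StarRing α]

theorem conjTranspose_schurCol_mul_fromRows (N : Matrix (m ⊕ n) (m ⊕ n) α)
    (X : Matrix m m α) :
    (schurCol N)ᴴ * fromRows X (0 : Matrix n m α) = X := by
  rw [schurCol, conjTranspose_fromRows_eq_fromCols_conjTranspose, fromCols_mul_fromRows,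
    conjTranspose_one, Matrix.one_mul, Matrix.mul_zero, add_zero]

theorem schurCompl_sub_conjTranspose {M N : Matrix (m ⊕ n) (m ⊕ n) α}
    (hM : IsUnit M.toBlocks₂₂) (hN : IsUnit N.toBlocks₂₂) :
    schurCompl M - (schurCompl N)ᴴ = (schurCol N)ᴴ * (M - Nᴴ) * schurCol M := by
  have hNM : (schurCol N)ᴴ * Nᴴ * schurCol M = (schurCompl N)ᴴ := by
    rw [← conjTranspose_mul, mul_schurCol hN, ← conjTranspose_conjTranspose (schurCol M),
      ← conjTranspose_mul, conjTranspose_schurCol_mul_fromRows]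
  rw [Matrix.mul_sub, Matrix.sub_mul, hNM, Matrix.mul_assoc, mul_schurCol hM,
    conjTranspose_schurCol_mul_fromRows]

end Matrix

theorem smul_pencil_sub_conjTranspose_pencil {d m n : ℕ}
    (H0 : Matrix (Fin m ⊕ Fin n) (Fin m ⊕ Fin n) ℂ)
    {A : Fin d → Matrix (Fin m ⊕ Fin n) (Fin m ⊕ Fin n) ℂ} (hA : ∀ k, (A k).IsHermitian)
    (z ζ : Fin d → ℂ) :
    (2 * Complex.I)⁻¹ • (pencil H0 A z - (pencil H0 A ζ)ᴴ) =
      imPart H0 + ∑ k, ((z k - starRingEnd ℂ (ζ k)) / (2 * Complex.I)) • A k := by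
  have hsum : (∑ k, ζ k • A k)ᴴ = ∑ k, starRingEnd ℂ (ζ k) • A k := by
    simp only [conjTranspose_sum, conjTranspose_smul, (hA _).eq]
    rfl
  simp only [pencil, imPart, conjTranspose_add, hsum, div_eq_inv_mul, mul_smul, ← Finset.smul_sum,
    ← smul_add, sub_smul, Finset.sum_sub_distrib]
  congr 1
  abel

theorem positive_kernel_decomposition_general (d m n : ℕ) (r0 : ℕ) (r : Fin d → ℕ)
    (H0 : Matrix (Fin m ⊕ Fin n) (Fin m ⊕ Fin n) ℂ)
    (A : Fin d → Matrix (Fin m ⊕ Fin n) (Fin m ⊕ Fin n) ℂ)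
    (hA : ∀ k, (A k).PosSemidef)
    (hinv : ∀ z ∈ UHP (Fin d), IsUnit ((pencil H0 A z).toBlocks₂₂))
    (B0 : Matrix (Fin r0) (Fin m ⊕ Fin n) ℂ)
    (hB0 : B0ᴴ * B0 = imPart H0)
    (B : (k : Fin d) → Matrix (Fin (r k)) (Fin m ⊕ Fin n) ℂ)
    (hB : ∀ k, (B k)ᴴ * B k = A k)
    (θ0 : (Fin d → ℂ) → Matrix (Fin r0) (Fin m) ℂ)
    (hθ0 : ∀ z, θ0 z = B0 * pencilCol H0 A z)
    (θ : (k : Fin d) → (Fin d → ℂ) → Matrix (Fin (r k)) (Fin m) ℂ)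
    (hθ : ∀ k z, θ k z = B k * pencilCol H0 A z)
    (f : (Fin d → ℂ) → Matrix (Fin m) (Fin m) ℂ)
    (hf : ∀ z, f z = (pencil H0 A z).toBlocks₁₁ -
      (pencil H0 A z).toBlocks₁₂ * ((pencil H0 A z).toBlocks₂₂)⁻¹ * (pencil H0 A z).toBlocks₂₁) :
    ∀ z ∈ UHP (Fin d), ∀ ζ ∈ UHP (Fin d),
      (2 * Complex.I)⁻¹ • (f z - (f ζ)ᴴ) =
        (θ0 ζ)ᴴ * θ0 z +
          ∑ k, ((z k - (starRingEnd ℂ) (ζ k)) / (2 * Complex.I)) • ((θ k ζ)ᴴ * θ k z) := by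
  intro z hz ζ hζ
  have hcol : ∀ w, pencilCol H0 A w = schurCol (pencil H0 A w) := fun _ => rfl
  have hgram : ∀ {r : ℕ} (C : Matrix (Fin r) (Fin m ⊕ Fin n) ℂ),
      (C * schurCol (pencil H0 A ζ))ᴴ * (C * schurCol (pencil H0 A z)) =
        (schurCol (pencil H0 A ζ))ᴴ * (Cᴴ * C) * schurCol (pencil H0 A z) := by
    intro r C
    simp only [conjTranspose_mul, Matrix.mul_assoc]
  simp only [hf, hθ0, hθ, hcol, hgram, hB0, hB]
  rw [← schurCompl, ← schurCompl, schurCompl_sub_conjTranspose (hinv z hz) (hinv ζ hζ),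
    ← Matrix.smul_mul, ← Matrix.mul_smul,
    smul_pencil_sub_conjTranspose_pencil H0 (fun k => (hA k).1),
    Matrix.mul_add, Matrix.add_mul, Matrix.mul_sum, Matrix.sum_mul]
  simp only [Matrix.mul_smul, Matrix.smul_mul]

/-- the positive-kernel decomposition
`(f(z)-f(ζ)*)/(2i) = θ₀(ζ)*θ₀(z) + Σ_k ((z_k-ζ̄_k)/(2i)) θ_k(ζ)*θ_k(z)`. -/
theorem positive_kernel_decomposition (d m n : ℕ) (r0 : ℕ) (r : Fin d → ℕ)
    (H0 : Matrix (Fin m ⊕ Fin n) (Fin m ⊕ Fin n) ℂ)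
    (A : Fin d → Matrix (Fin m ⊕ Fin n) (Fin m ⊕ Fin n) ℂ)
    (hH0 : (imPart H0).PosSemidef)
    (hA : ∀ k, (A k).PosSemidef)
    (hinv : ∀ z ∈ UHP (Fin d), IsUnit ((pencil H0 A z).toBlocks₂₂))
    (B0 : Matrix (Fin r0) (Fin m ⊕ Fin n) ℂ)
    (hB0 : B0ᴴ * B0 = imPart H0)
    (B : (k : Fin d) → Matrix (Fin (r k)) (Fin m ⊕ Fin n) ℂ)
    (hB : ∀ k, (B k)ᴴ * B k = A k)
    (θ0 : (Fin d → ℂ) → Matrix (Fin r0) (Fin m) ℂ)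
    (hθ0 : ∀ z, θ0 z = B0 * pencilCol H0 A z)
    (θ : (k : Fin d) → (Fin d → ℂ) → Matrix (Fin (r k)) (Fin m) ℂ)
    (hθ : ∀ k z, θ k z = B k * pencilCol H0 A z)
    (f : (Fin d → ℂ) → Matrix (Fin m) (Fin m) ℂ)
    (hf : ∀ z, f z = (pencil H0 A z).toBlocks₁₁ -
      (pencil H0 A z).toBlocks₁₂ * ((pencil H0 A z).toBlocks₂₂)⁻¹ * (pencil H0 A z).toBlocks₂₁) :
    ∀ z ∈ UHP (Fin d), ∀ ζ ∈ UHP (Fin d),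
      (2 * Complex.I)⁻¹ • (f z - (f ζ)ᴴ) =
        (θ0 ζ)ᴴ * θ0 z +
          ∑ k, ((z k - (starRingEnd ℂ) (ζ k)) / (2 * Complex.I)) • ((θ k ζ)ᴴ * θ k z) :=
  positive_kernel_decomposition_general d m n r0 r H0 A hA hinv B0 hB0 B hB θ0 hθ0 θ hθ f hf
end
end

section
/- If f(z) = P(z)/q(z) is a rational ℂ^{m×m}-valued Cayley inner function of the Pick class ℐ𝒫_d^{m×m}, then each partial Wronskian W_k[q, P](z) = q(z)·∂P/∂z_k(z) − P(z)·∂q/∂z_k(z), k = 1, …, d, is a positive semidefinite (PSD) matrix-valued polynomial, i.e., W_k[q, P](x) ⪰ 0 for every x ∈ ℝ^d. -/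
open Matrix MvPolynomial
open scoped ComplexOrder

noncomputable section

/-- Conjugation of the coefficients of a polynomial; `eval z (conjPoly p) = conj (p(z̄))`. -/
def conjPoly {d : ℕ} (p : MvPolynomial (Fin d) ℂ) : MvPolynomial (Fin d) ℂ :=
  MvPolynomial.map (starRingEnd ℂ) p

/-- The partial Wronskian `W_k[q,P] = q ∂P/∂z_k − P ∂q/∂z_k` (a matrix of polynomials). -/
def wronskian {d m : ℕ} (q : MvPolynomial (Fin d) ℂ)
    (P : Matrix (Fin m) (Fin m) (MvPolynomial (Fin d) ℂ)) (k : Fin d) :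
    Matrix (Fin m) (Fin m) (MvPolynomial (Fin d) ℂ) :=
  Matrix.of fun i j => q * pderiv k (P i j) - P i j * pderiv k q

/-!
Fix a real point `x`, a direction `k` and a vector `v`, and let `p = v* P v`, again a polynomial
that is real on `ℝ^d`. The Pick property of `P/q` gives `Im (conj q · p) ≥ 0` on `Π^d`, hence on
its closure; clearing the denominator this way also covers the zeros of `q`. Along the ray
`t ↦ x + i t e_k`, `t ≥ 0`, this function is nonnegative and vanishes at `t = 0` (where `p` and `q`
are real), so its derivative there, `(q ∂ₖp − p ∂ₖq)(x) = v* W_k[q,P](x) v`, is nonnegative.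
-/

open Filter Topology

theorem MvPolynomial.hasDerivAt_eval_update {σ : Type*} [DecidableEq σ]
    (p : MvPolynomial σ ℂ) (x : σ → ℂ) (k : σ) (c : ℂ) (t : ℝ) :
    HasDerivAt (fun t : ℝ => eval (Function.update x k (x k + t * c)) p)
      (c * eval (Function.update x k (x k + t * c)) (pderiv k p)) t := by
  induction p using MvPolynomial.induction_on with
  | C a => simpa using hasDerivAt_const t a
  | add p q hp hq => simpa [mul_add] using hp.fun_add hq
  | mul_X p j hp =>
    by_cases hj : j = k
    · subst hj
      have hline : HasDerivAt (fun t : ℝ => x j + t * c) c t := by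
        simpa using ((hasDerivAt_id (t : ℂ)).comp_ofReal.mul_const c).const_add (x j)
      have key : HasDerivAt (fun t : ℝ => eval (Function.update x j (x j + t * c)) (p * X j))
          (c * eval (Function.update x j (x j + t * c)) (pderiv j p) * (x j + t * c)
            + eval (Function.update x j (x j + t * c)) p * c) t := by
        simpa using hp.fun_mul hline
      refine key.congr_deriv ?_
      simp only [Derivation.leibniz, pderiv_X_self, smul_eq_mul, mul_one, map_add, map_mul, eval_X,
        Function.update_self]
      ring
    · simpa [Function.update_of_ne hj, pderiv_X_of_ne hj, mul_assoc, mul_comm, mul_left_comm]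
        using hp.mul_const (x j)

theorem subset_closure_UHP (ι : Type*) :
    {z : ι → ℂ | ∀ k, 0 ≤ (z k).im} ⊆ closure (UHP ι) := by
  intro z hz
  have hpath : Tendsto (fun ε : ℝ => z + (ε : ℂ) • fun _ => Complex.I) (𝓝[>] 0) (𝓝 z) := by
    have : Continuous fun ε : ℝ => z + (ε : ℂ) • fun _ => Complex.I := by fun_prop
    simpa using (this.tendsto 0).mono_left (nhdsWithin_le_nhds (s := Set.Ioi 0))
  refine mem_closure_of_tendsto hpath ?_
  filter_upwards [self_mem_nhdsWithin] with ε (hε : 0 < ε) k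
  simpa using add_pos_of_nonneg_of_pos (hz k) hε

theorem HasDerivAt.nonneg_of_le_right {h : ℝ → ℝ} {h' a : ℝ} (hd : HasDerivAt h h' a)
    (hmin : ∀ t, a < t → h a ≤ h t) : 0 ≤ h' := by
  refine ge_of_tendsto ((hasDerivWithinAt_iff_tendsto_slope' Set.self_notMem_Ioi).mp
    (hd.hasDerivWithinAt (s := Set.Ioi a))) ?_
  filter_upwards [self_mem_nhdsWithin] with t ht
  rw [slope_def_field]
  exact div_nonneg (sub_nonneg.mpr (hmin t ht)) (sub_nonneg.mpr (le_of_lt ht))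

theorem im_star_dotProduct_mulVec_nonneg {n : Type*} [Fintype n] {M : Matrix n n ℂ}
    (hM : (imPart M).PosSemidef) (v : n → ℂ) : 0 ≤ (star v ⬝ᵥ (M *ᵥ v)).im := by
  have h := hM.dotProduct_mulVec_nonneg v
  have hconj : star v ⬝ᵥ (Mᴴ *ᵥ v) = star (star v ⬝ᵥ (M *ᵥ v)) := by
    rw [dotProduct_mulVec, ← star_mulVec, ← star_dotProduct_star, star_star]
  rw [imPart, smul_mulVec, sub_mulVec, dotProduct_smul, dotProduct_sub, hconj, smul_eq_mul,
    Complex.star_def, Complex.sub_conj] at h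
  have h2I : (2 * Complex.I)⁻¹ * (((2 * (star v ⬝ᵥ (M *ᵥ v)).im : ℝ) : ℂ) * Complex.I)
      = ((star v ⬝ᵥ (M *ᵥ v)).im : ℂ) := by
    push_cast
    field_simp
  rwa [h2I, Complex.zero_le_real] at h

theorem im_star_mul_dotProduct_mulVec_nonneg {n : Type*} [Fintype n] {c : ℂ} {A : Matrix n n ℂ}
    (hA : (imPart (c⁻¹ • A)).PosSemidef) (v : n → ℂ) :
    0 ≤ (star c * (star v ⬝ᵥ (A *ᵥ v))).im := by
  have h := im_star_dotProduct_mulVec_nonneg hA v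
  rw [smul_mulVec, dotProduct_smul, smul_eq_mul] at h
  rcases eq_or_ne c 0 with rfl | hc
  · simp
  have hnormSq : star c * (star v ⬝ᵥ (A *ᵥ v))
      = (Complex.normSq c : ℂ) * (c⁻¹ * (star v ⬝ᵥ (A *ᵥ v))) := by
    rw [← Complex.mul_conj, Complex.star_def]
    field_simp
  rw [hnormSq, Complex.im_ofReal_mul]
  exact mul_nonneg (Complex.normSq_nonneg c) h

section RealPoints

variable {d : ℕ}

theorem star_eval_ofReal (p : MvPolynomial (Fin d) ℂ) (x : Fin d → ℝ) :
    star (eval (fun t => (x t : ℂ)) p) = eval (fun t => (x t : ℂ)) (conjPoly p) := by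
  rw [conjPoly, eval_map, eval, coe_eval₂Hom, Complex.star_def, hom_eval₂]
  simp

theorem ofReal_re_eval_ofReal {p : MvPolynomial (Fin d) ℂ} (hp : conjPoly p = p)
    (x : Fin d → ℝ) :
    ((eval (fun t => (x t : ℂ)) p).re : ℂ) = eval (fun t => (x t : ℂ)) p := by
  rw [← Complex.conj_eq_iff_re, ← Complex.star_def, star_eval_ofReal, hp]

theorem conjPoly_pderiv (p : MvPolynomial (Fin d) ℂ) (k : Fin d) :
    conjPoly (pderiv k p) = pderiv k (conjPoly p) :=
  pderiv_map.symm

theorem isHermitian_eval_ofReal {n : Type*} {M : Matrix n n (MvPolynomial (Fin d) ℂ)}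
    (hM : ∀ i j, conjPoly (M i j) = M j i) (x : Fin d → ℝ) :
    (Matrix.of fun i j => eval (fun t => (x t : ℂ)) (M i j)).IsHermitian := by
  ext i j
  simp [star_eval_ofReal, hM]

theorem conjPoly_wronskian {m : ℕ} {q : MvPolynomial (Fin d) ℂ}
    {P : Matrix (Fin m) (Fin m) (MvPolynomial (Fin d) ℂ)} (hq : conjPoly q = q)
    (hP : ∀ i j, conjPoly (P i j) = P j i) (k : Fin d) (i j : Fin m) :
    conjPoly (wronskian q P k i j) = wronskian q P k j i := by
  simp only [conjPoly] at hq hP ⊢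
  simp only [wronskian, of_apply, map_sub, map_mul, ← pderiv_map, hq, hP]

end RealPoints

section QuadForm

variable {n σ : Type*} [Fintype n]

def quadForm (P : Matrix n n (MvPolynomial σ ℂ)) (v : n → ℂ) : MvPolynomial σ ℂ :=
  ∑ i, ∑ j, C (star (v i) * v j) * P i j

theorem eval_quadForm (P : Matrix n n (MvPolynomial σ ℂ)) (v : n → ℂ) (z : σ → ℂ) :
    eval z (quadForm P v) = star v ⬝ᵥ ((Matrix.of fun i j => eval z (P i j)) *ᵥ v) := by
  simp only [quadForm, dotProduct, mulVec, map_sum, map_mul, eval_C, Finset.mul_sum, of_apply,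
    Pi.star_apply]
  exact Finset.sum_congr rfl fun i _ => Finset.sum_congr rfl fun j _ => by ring

theorem quadForm_wronskian {d m : ℕ} (q : MvPolynomial (Fin d) ℂ)
    (P : Matrix (Fin m) (Fin m) (MvPolynomial (Fin d) ℂ)) (k : Fin d) (v : Fin m → ℂ) :
    quadForm (wronskian q P k) v = q * pderiv k (quadForm P v) - quadForm P v * pderiv k q := by
  simp only [quadForm, wronskian, of_apply, map_sum, pderiv_C_mul, Finset.mul_sum,
    Finset.sum_mul, ← Finset.sum_sub_distrib]
  exact Finset.sum_congr rfl fun i _ => Finset.sum_congr rfl fun j _ => by ring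

theorem conjPoly_quadForm {d : ℕ} {P : Matrix n n (MvPolynomial (Fin d) ℂ)}
    (hP : ∀ i j, conjPoly (P i j) = P j i) (v : n → ℂ) :
    conjPoly (quadForm P v) = quadForm P v := by
  simp only [conjPoly] at hP
  simp only [quadForm, conjPoly, map_sum, map_mul, map_C, hP]
  rw [Finset.sum_comm]
  refine Finset.sum_congr rfl fun i _ => Finset.sum_congr rfl fun j _ => ?_
  simp [mul_comm]

end QuadForm

theorem eval_ofReal_wronskian_nonneg_of_im_nonneg {d : ℕ} {p q : MvPolynomial (Fin d) ℂ}
    (hp : conjPoly p = p) (hq : conjPoly q = q)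
    (hpick : ∀ z ∈ UHP (Fin d), 0 ≤ (star (eval z q) * eval z p).im)
    (k : Fin d) (x : Fin d → ℝ) :
    0 ≤ eval (fun t => (x t : ℂ)) (q * pderiv k p - p * pderiv k q) := by
  set x' : Fin d → ℂ := fun t => (x t : ℂ)
  set γ : ℝ → Fin d → ℂ := fun t => Function.update x' k (x' k + t * Complex.I)
  set h : ℝ → ℝ := fun t => (star (eval (γ t) q) * eval (γ t) p).im
  have hγ0 : γ 0 = x' := by simp [γ]
  have hclosure : ∀ z ∈ closure (UHP (Fin d)), 0 ≤ (star (eval z q) * eval z p).im :=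
    closure_minimal hpick <| isClosed_le continuous_const <| Complex.continuous_im.comp <|
      (continuous_eval q).star.mul (continuous_eval p)
  have hγ_mem : ∀ t, 0 < t → γ t ∈ closure (UHP (Fin d)) := by
    intro t ht
    refine subset_closure_UHP _ fun s => ?_
    rcases eq_or_ne s k with rfl | hs
    · simpa [γ, x'] using ht.le
    · simp [γ, x', hs]
  obtain ⟨a, ha⟩ : ∃ a : ℝ, (a : ℂ) = eval x' p := ⟨_, ofReal_re_eval_ofReal hp x⟩
  obtain ⟨b, hb⟩ : ∃ b : ℝ, (b : ℂ) = eval x' q := ⟨_, ofReal_re_eval_ofReal hq x⟩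
  obtain ⟨a', ha'⟩ : ∃ a' : ℝ, (a' : ℂ) = eval x' (pderiv k p) :=
    ⟨_, ofReal_re_eval_ofReal (by rw [conjPoly_pderiv, hp]) x⟩
  obtain ⟨b', hb'⟩ : ∃ b' : ℝ, (b' : ℂ) = eval x' (pderiv k q) :=
    ⟨_, ofReal_re_eval_ofReal (by rw [conjPoly_pderiv, hq]) x⟩
  have hh0 : h 0 = 0 := by simp [h, hγ0, ← ha, ← hb]
  have hderiv : HasDerivAt h (b * a' - a * b') 0 := by
    have hq' := (hasDerivAt_eval_update q x' k Complex.I 0).star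
    have hp' := hasDerivAt_eval_update p x' k Complex.I 0
    refine (Complex.imCLM.hasFDerivAt.comp_hasDerivAt (0 : ℝ) (hq'.fun_mul hp')).congr_deriv ?_
    simp only [Complex.ofReal_zero, zero_mul, add_zero, Function.update_eq_self, ← ha, ← hb,
      ← ha', ← hb', star_mul', Complex.star_def, Complex.conj_I, Complex.conj_ofReal,
      Complex.imCLM_apply, Complex.add_im, Complex.mul_im, Complex.neg_im, Complex.neg_re,
      Complex.I_re, Complex.I_im, Complex.ofReal_re, Complex.ofReal_im]
    ring
  have hD := hderiv.nonneg_of_le_right fun t ht => by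
    rw [hh0]
    exact hclosure _ (hγ_mem t ht)
  rw [eval_sub, eval_mul, eval_mul, ← ha, ← hb, ← ha', ← hb']
  exact_mod_cast hD

theorem wronskians_PSD_general (d m : ℕ)
    (P : Matrix (Fin m) (Fin m) (MvPolynomial (Fin d) ℂ))
    (q : MvPolynomial (Fin d) ℂ)
    -- Cayley inner normalization: `q(z̄)‾ = q(z)` and `P(z̄)* = P(z)`
    (hq : conjPoly q = q)
    (hP : ∀ i j, conjPoly (P i j) = P j i)
    (f : (Fin d → ℂ) → Matrix (Fin m) (Fin m) ℂ)
    (hfdef : ∀ z, f z = (eval z q)⁻¹ • Matrix.of fun i j => eval z (P i j))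
    -- `f` belongs to the Pick class `𝒫_d^{m×m}` :
    (hfpick : ∀ z ∈ UHP (Fin d), (imPart (f z)).PosSemidef) :
    ∀ (k : Fin d) (x : Fin d → ℝ),
      (Matrix.of fun i j => eval (fun t => (x t : ℂ)) (wronskian q P k i j)).PosSemidef := by
  intro k x
  refine .of_dotProduct_mulVec_nonneg (isHermitian_eval_ofReal (conjPoly_wronskian hq hP k) x)
    fun v => ?_
  rw [← eval_quadForm, quadForm_wronskian]
  refine eval_ofReal_wronskian_nonneg_of_im_nonneg (conjPoly_quadForm hP v) hq (fun z hz => ?_) k x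
  have hpick := hfpick z hz
  rw [hfdef] at hpick
  simpa only [eval_quadForm] using im_star_mul_dotProduct_mulVec_nonneg hpick v

/-- for a rational Cayley inner function `f = P/q` of the Pick class
(written, as one always may, with a real-coefficient denominator `q` and Hermitian
coefficient matrices for `P`), every partial Wronskian `W_k[q,P]` is a positive
semidefinite matrix-valued polynomial on `ℝ^d`. -/
theorem wronskians_PSD (d m : ℕ)
    (P : Matrix (Fin m) (Fin m) (MvPolynomial (Fin d) ℂ))
    (q : MvPolynomial (Fin d) ℂ)
    -- Cayley inner normalization: `q(z̄)‾ = q(z)` and `P(z̄)* = P(z)`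
    (hq : conjPoly q = q)
    (hP : ∀ i j, conjPoly (P i j) = P j i)
    (f : (Fin d → ℂ) → Matrix (Fin m) (Fin m) ℂ)
    (hfdef : ∀ z, f z = (eval z q)⁻¹ • Matrix.of fun i j => eval z (P i j))
    -- `f` belongs to the Pick class `𝒫_d^{m×m}` :
    (hfhol : ∀ i j, DifferentiableOn ℂ (fun z => f z i j) (UHP (Fin d)))
    (hfpick : ∀ z ∈ UHP (Fin d), (imPart (f z)).PosSemidef)
    -- `f` is Cayley inner: Hermitian values at real points where it is defined :
    (hherm : ∀ x : Fin d → ℝ, eval (fun t => (x t : ℂ)) q ≠ 0 →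
      (f fun t => (x t : ℂ)).IsHermitian) :
    ∀ (k : Fin d) (x : Fin d → ℝ),
      (Matrix.of fun i j => eval (fun t => (x t : ℂ)) (wronskian q P k i j)).PosSemidef :=
  wronskians_PSD_general d m P q hq hP f hfdef hfpick
end
end

section
/- Let a₁₁, a₁₂, a₁₃, a₂₁, a₂₂, a₂₃, a₃₁, a₃₂, a₃₃ be matrices of compatible block sizes and Z₁, Z₂ square matrices such that a₃₃ + Z₂ is invertible; set g₁₁ = a₁₁ − a₁₃(a₃₃+Z₂)⁻¹a₃₁, g₁₂ = a₁₂ − a₁₃(a₃₃+Z₂)⁻¹a₃₂, g₂₁ = a₂₁ − a₂₃(a₃₃+Z₂)⁻¹a₃₁, g₂₂ = a₂₂ − a₂₃(a₃₃+Z₂)⁻¹a₃₂, and suppose g₂₂ + Z₁ is invertible. Then the 2×2 block matrix [[a₂₂+Z₁, a₂₃], [a₃₂, a₃₃+Z₂]] is invertible and g₁₁ − g₁₂(g₂₂+Z₁)⁻¹g₂₁ = a₁₁ − (a₁₂, a₁₃) · [[a₂₂+Z₁, a₂₃], [a₃₂, a₃₃+Z₂]]⁻¹ · (a₂₁; a₃₁).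 -/
open Matrix

noncomputable section

/-! Eliminating the third block row and column of `[[a₁₁, a₁₂, a₁₃], [a₂₁, a₂₂ + Z₁, a₂₃],
[a₃₁, a₃₂, a₃₃ + Z₂]]` first and then the second one gives the same result as eliminating both at
once (the quotient property of Schur complements): with `D = a₃₃ + Z₂` and
`S = a₂₂ + Z₁ - a₂₃ D⁻¹ a₃₂ = g₂₂ + Z₁`, the block inverse formula turns
`(a₁₂, a₁₃) [[a₂₂ + Z₁, a₂₃], [a₃₂, D]]⁻¹ (a₂₁; a₃₁)` into `g₁₂ S⁻¹ g₂₁ + a₁₃ D⁻¹ a₃₁`. -/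

namespace Matrix

variable {k l m n α : Type*} [Fintype m] [Fintype n] [DecidableEq m] [DecidableEq n] [CommRing α]
  {A : Matrix m m α} {B : Matrix m n α} {C : Matrix n m α} {D : Matrix n n α}

theorem isUnit_fromBlocks_of_isUnit₂₂ (hD : IsUnit D) (hS : IsUnit (A - B * D⁻¹ * C)) :
    IsUnit (fromBlocks A B C D) := by
  cases hD.nonempty_invertible
  rw [isUnit_fromBlocks_iff_of_invertible₂₂, invOf_eq_nonsing_inv]
  exact hS

theorem inv_fromBlocks_of_isUnit₂₂ (hD : IsUnit D) (hS : IsUnit (A - B * D⁻¹ * C)) :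
    (fromBlocks A B C D)⁻¹ =
      fromBlocks (A - B * D⁻¹ * C)⁻¹ (-((A - B * D⁻¹ * C)⁻¹ * B * D⁻¹))
        (-(D⁻¹ * C * (A - B * D⁻¹ * C)⁻¹)) (D⁻¹ + D⁻¹ * C * (A - B * D⁻¹ * C)⁻¹ * B * D⁻¹) := by
  cases hD.nonempty_invertible
  rw [← invOf_eq_nonsing_inv D] at hS ⊢
  cases hS.nonempty_invertible
  let := fromBlocks₂₂Invertible A B C D
  simp only [← invOf_eq_nonsing_inv, invOf_fromBlocks₂₂_eq]

theorem fromCols_mul_inv_fromBlocks_mul_fromRows (P : Matrix l m α) (Q : Matrix l n α)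
    (X : Matrix m k α) (Y : Matrix n k α) (hD : IsUnit D) (hS : IsUnit (A - B * D⁻¹ * C)) :
    fromCols P Q * (fromBlocks A B C D)⁻¹ * fromRows X Y =
      (P - Q * D⁻¹ * C) * (A - B * D⁻¹ * C)⁻¹ * (X - B * D⁻¹ * Y) + Q * D⁻¹ * Y := by
  rw [inv_fromBlocks_of_isUnit₂₂ hD hS, fromCols_mul_fromBlocks, fromCols_mul_fromRows]
  generalize (A - B * D⁻¹ * C)⁻¹ = S
  simp only [Matrix.sub_mul, Matrix.mul_sub, Matrix.add_mul, Matrix.mul_add, Matrix.neg_mul,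
    Matrix.mul_neg, Matrix.mul_assoc]
  abel

end Matrix

/-- superposition of coefficient matrices of fractional linear
transformations of the form `W = g₁₁ − g₁₂(g₂₂+Z)⁻¹g₂₁`. -/
theorem flt_superposition (n1 n2 n3 : ℕ)
    (a11 : Matrix (Fin n1) (Fin n1) ℂ) (a12 : Matrix (Fin n1) (Fin n2) ℂ)
    (a13 : Matrix (Fin n1) (Fin n3) ℂ)
    (a21 : Matrix (Fin n2) (Fin n1) ℂ) (a22 : Matrix (Fin n2) (Fin n2) ℂ)
    (a23 : Matrix (Fin n2) (Fin n3) ℂ)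
    (a31 : Matrix (Fin n3) (Fin n1) ℂ) (a32 : Matrix (Fin n3) (Fin n2) ℂ)
    (a33 : Matrix (Fin n3) (Fin n3) ℂ)
    (Z1 : Matrix (Fin n2) (Fin n2) ℂ) (Z2 : Matrix (Fin n3) (Fin n3) ℂ)
    (hZ2 : IsUnit (a33 + Z2))
    (g11 : Matrix (Fin n1) (Fin n1) ℂ) (g12 : Matrix (Fin n1) (Fin n2) ℂ)
    (g21 : Matrix (Fin n2) (Fin n1) ℂ) (g22 : Matrix (Fin n2) (Fin n2) ℂ)
    (hg11 : g11 = a11 - a13 * (a33 + Z2)⁻¹ * a31)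
    (hg12 : g12 = a12 - a13 * (a33 + Z2)⁻¹ * a32)
    (hg21 : g21 = a21 - a23 * (a33 + Z2)⁻¹ * a31)
    (hg22 : g22 = a22 - a23 * (a33 + Z2)⁻¹ * a32)
    (hZ1 : IsUnit (g22 + Z1)) :
    IsUnit (Matrix.fromBlocks (a22 + Z1) a23 a32 (a33 + Z2)) ∧
    g11 - g12 * (g22 + Z1)⁻¹ * g21 =
      a11 - Matrix.fromCols a12 a13 *
        (Matrix.fromBlocks (a22 + Z1) a23 a32 (a33 + Z2))⁻¹ * Matrix.fromRows a21 a31 := by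
  have hSchur : g22 + Z1 = a22 + Z1 - a23 * (a33 + Z2)⁻¹ * a32 := by
    rw [hg22]
    abel
  rw [hSchur] at hZ1 ⊢
  refine ⟨isUnit_fromBlocks_of_isUnit₂₂ hZ2 hZ1, ?_⟩
  rw [fromCols_mul_inv_fromBlocks_mul_fromRows _ _ _ _ hZ2 hZ1, hg11, hg12, hg21]
  abel
end
end

section
/- Let F ∈ ℝ[x₁, …, x_d] be a PSD polynomial that is not a sum of squares of real polynomials, and let s ∈ ℝ[x₁, …, x_d] be an irreducible indefinite polynomial (s takes both positive and negative values on ℝ^d). Then s²F is also PSD and is not a sum of squares of real polynomials. -/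
/-!
If `s²F = ∑ gᵢ²`, every `gᵢ` vanishes on the real zero set of `s`. Because `s` is irreducible and
changes sign, that forces `s ∣ gᵢ`, and cancelling `s²` writes `F` as a sum of squares.

To see `s ∣ h` when `h` vanishes wherever `s` does, shear coordinates so that `s` changes sign along
every line in the `x₀`-direction through a neighbourhood of a point `y₀`. If `s ∤ h`, Gauss's lemma
makes them coprime over the fraction field of `ℝ[x₁, …, xₙ]`, and the resultant gives a nonzero
`r(x₁, …, xₙ) ∈ (s, h)`. Each of those lines meets the zero set of `s`, so `r` vanishes near `y₀`,
hence `r = 0`.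
-/

open MvPolynomial

noncomputable section

/-- A scalar real polynomial is SOS if it is a finite sum of squares of real
polynomials. -/
def IsSOSReal {d : ℕ} (F : MvPolynomial (Fin d) ℝ) : Prop :=
  ∃ (k : ℕ) (h : Fin k → MvPolynomial (Fin d) ℝ), F = ∑ i, h i ^ 2

open Topology

theorem Polynomial.exists_mul_add_mul_eq_C_of_not_dvd {R : Type*} [CommRing R] [IsDomain R]
    [IsGCDMonoid R] {f g : Polynomial R} (hf : Irreducible f) (hdeg : f.natDegree ≠ 0)
    (hfg : ¬f ∣ g) : ∃ r ≠ 0, ∃ p q, f * p + g * q = Polynomial.C r := by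
  let φ := algebraMap R (FractionRing R)
  have hφ : Function.Injective φ := IsFractionRing.injective R (FractionRing R)
  have hprim := hf.isPrimitive hdeg
  have hcop : IsCoprime (f.map φ) (g.map φ) :=
    (hprim.irreducible_iff_irreducible_map_fraction_map.mp hf).coprime_iff_not_dvd.mpr
      (mt (hprim.dvd_iff_fraction_map_dvd_fraction_map _).mpr hfg)
  obtain ⟨p, q, -, -, hpq⟩ := exists_mul_add_mul_eq_C_resultant f g le_rfl le_rfl (.inl hdeg)
  refine ⟨_, fun h0 => resultant_ne_zero _ _ hcop ?_, p, q, hpq⟩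
  rw [natDegree_map_eq_of_injective hφ, natDegree_map_eq_of_injective hφ, resultant_map_map, h0,
    map_zero]

namespace MvPolynomial

variable {n : ℕ}

section CommRing

variable {R : Type*} [CommRing R]

def shear (v : Fin n → R) : MvPolynomial (Fin (n + 1)) R ≃ₐ[R] MvPolynomial (Fin (n + 1)) R :=
  AlgEquiv.ofAlgHom (aeval (Fin.cons (X 0) fun j => X j.succ + C (v j) * X 0))
    (aeval (Fin.cons (X 0) fun j => X j.succ - C (v j) * X 0))
    (by ext i : 1; cases i using Fin.cases <;> simp)
    (by ext i : 1; cases i using Fin.cases <;> simp)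

theorem eval_shear (v : Fin n → R) (x : Fin (n + 1) → R) (p : MvPolynomial (Fin (n + 1)) R) :
    eval x (shear v p) = eval (Fin.cons (x 0) fun j => x j.succ + v j * x 0) p := by
  induction p using MvPolynomial.induction_on with
  | C a => simp [shear]
  | add p q hp hq => simp_all
  | mul_X p i hp => cases i using Fin.cases <;> simp_all [shear]

theorem finSuccEquiv_rename_succ (p : MvPolynomial (Fin n) R) :
    finSuccEquiv R n (rename Fin.succ p) = Polynomial.C p := by
  induction p using MvPolynomial.induction_on with
  | C a => simp [finSuccEquiv_apply]
  | add p q hp hq => simp_all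
  | mul_X p i hp => simp_all [finSuccEquiv_X_succ]

theorem _root_.Prime.rename_succ {p : MvPolynomial (Fin n) R} (hp : Prime p) :
    Prime (rename Fin.succ p) := by
  rw [← MulEquiv.prime_iff (finSuccEquiv R n), finSuccEquiv_rename_succ]
  exact Polynomial.prime_C_iff.mpr hp

theorem natDegree_finSuccEquiv_ne_zero_of_eval_ne
    {p : MvPolynomial (Fin (n + 1)) R} {y : Fin n → R} {t₀ t₁ : R}
    (h : eval (Fin.cons t₀ y) p ≠ eval (Fin.cons t₁ y) p) :
    (finSuccEquiv R n p).natDegree ≠ 0 := by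
  intro h0
  obtain ⟨c, hc⟩ := Polynomial.natDegree_eq_zero.mp h0
  simp [eval_eq_eval_mv_eval', ← hc] at h

end CommRing

theorem eq_zero_of_eventually_eval_eq_zero {σ : Type*} [Fintype σ]
    {p : MvPolynomial σ ℝ} {z : σ → ℝ} (h : ∀ᶠ x in 𝓝 z, eval x p = 0) : p = 0 :=
  funext fun x => by
    simpa using (AnalyticOnNhd.eval_mvPolynomial p).eqOn_zero_of_preconnected_of_eventuallyEq_zero
      isPreconnected_univ (Set.mem_univ z) h (Set.mem_univ x)

theorem exists_eval_cons_eq_zero (p : MvPolynomial (Fin (n + 1)) ℝ)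
    {y : Fin n → ℝ} {t₀ t₁ : ℝ}
    (h₀ : 0 < eval (Fin.cons t₀ y) p) (h₁ : eval (Fin.cons t₁ y) p < 0) :
    ∃ t, eval (Fin.cons t y) p = 0 := by
  have hcont : Continuous fun t : ℝ => eval (Fin.cons t y) p :=
    (continuous_eval p).comp (by fun_prop)
  obtain ⟨t, -, ht⟩ := intermediate_value_uIcc hcont.continuousOn
    (Set.mem_uIcc.mpr (.inr ⟨h₁.le, h₀.le⟩))
  exact ⟨t, ht⟩

theorem dvd_of_eval_eq_zero_of_sign_change
    {s h : MvPolynomial (Fin (n + 1)) ℝ} (hs : Irreducible s) {y₀ : Fin n → ℝ} {t₀ t₁ : ℝ}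
    (h₀ : 0 < eval (Fin.cons t₀ y₀) s) (h₁ : eval (Fin.cons t₁ y₀) s < 0)
    (hh : ∀ x, eval x s = 0 → eval x h = 0) : s ∣ h := by
  by_contra hsh
  obtain ⟨r, hr, p, q, hpq⟩ := Polynomial.exists_mul_add_mul_eq_C_of_not_dvd
    (hs.map (finSuccEquiv ℝ n))
    (natDegree_finSuccEquiv_ne_zero_of_eval_ne (h₀.trans' h₁).ne')
    (mt (map_dvd_iff (finSuccEquiv ℝ n)).mp hsh)
  refine hr (eq_zero_of_eventually_eval_eq_zero (z := y₀) ?_)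
  have hcont (t : ℝ) : Continuous fun y : Fin n → ℝ => eval (Fin.cons t y) s :=
    (continuous_eval s).comp (by fun_prop)
  filter_upwards [continuousAt_const.eventually_lt (hcont t₀).continuousAt h₀,
    (hcont t₁).continuousAt.eventually_lt continuousAt_const h₁] with y hy₀ hy₁
  obtain ⟨t, ht⟩ := exists_eval_cons_eq_zero s hy₀ hy₁
  have hst : eval (Fin.cons t y) s = 0 ∧ eval (Fin.cons t y) h = 0 := ⟨ht, hh _ ht⟩
  simp only [eval_eq_eval_mv_eval'] at hst
  simpa [hst] using (congrArg (fun P => (P.map (eval y)).eval t) hpq).symm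

theorem dvd_of_eval_eq_zero_of_indefinite
    {s h : MvPolynomial (Fin n) ℝ} (hs : Irreducible s) {a b : Fin n → ℝ}
    (ha : 0 < eval a s) (hb : eval b s < 0) (hh : ∀ x, eval x s = 0 → eval x h = 0) : s ∣ h := by
  -- `p ↦ p(x' + x₀ • (b - a))` carries the segment `[a, b]` to the `x₀`-line through `(0, a)`,
  -- and substituting `x₀ = 0` undoes it.
  let lift (p : MvPolynomial (Fin n) ℝ) := shear (b - a) (rename Fin.succ p)
  have eval_lift (x : Fin (n + 1) → ℝ) (p : MvPolynomial (Fin n) ℝ) :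
      eval x (lift p) = eval (fun j => x j.succ + (b - a) j * x 0) p := by
    simp [lift, eval_shear, eval_rename, Function.comp_def]
  have hlift : lift s ∣ lift h := by
    refine dvd_of_eval_eq_zero_of_sign_change (t₀ := 0) (t₁ := 1) (y₀ := a) ?_ ?_ ?_ ?_
    · exact ((MulEquiv.prime_iff (shear (b - a))).mpr
        (UniqueFactorizationMonoid.irreducible_iff_prime.mp hs).rename_succ).irreducible
    · simpa [eval_lift] using ha
    · simpa [eval_lift] using hb
    · intro x hx
      rw [eval_lift] at hx ⊢
      exact hh _ hx
  have hrename := (map_dvd_iff (shear (b - a))).mp hlift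
  simpa [bind₁_rename, Fin.cons_comp_succ] using
    map_dvd (aeval (Fin.cons 0 X : Fin (n + 1) → MvPolynomial (Fin n) ℝ)) hrename

end MvPolynomial

/-- if `F` is PSD but not a sum of squares and `s` is irreducible and
indefinite, then `s²F` is PSD and not a sum of squares. -/
theorem psd_not_sos_times_indefinite_square (d : ℕ)
    (F s : MvPolynomial (Fin d) ℝ)
    (hPSD : ∀ x : Fin d → ℝ, 0 ≤ eval x F)
    (hnotSOS : ¬ IsSOSReal F)
    (hirr : Irreducible s)
    (hindef : (∃ a : Fin d → ℝ, 0 < eval a s) ∧ (∃ b : Fin d → ℝ, eval b s < 0)) :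
    (∀ x : Fin d → ℝ, 0 ≤ eval x (s ^ 2 * F)) ∧ ¬ IsSOSReal (s ^ 2 * F) := by
  obtain ⟨⟨a, ha⟩, ⟨b, hb⟩⟩ := hindef
  refine ⟨fun x => by simpa using mul_nonneg (sq_nonneg (eval x s)) (hPSD x), ?_⟩
  rintro ⟨k, g, hg⟩
  have hdvd (i : Fin k) : s ∣ g i := by
    refine dvd_of_eval_eq_zero_of_indefinite hirr ha hb fun x hx => ?_
    have hsum : ∑ j, eval x (g j) * eval x (g j) = 0 := by
      simpa [hx, sq] using (congrArg (eval x) hg).symm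
    exact (Finset.sum_mul_self_eq_zero_iff _ _).mp hsum i (Finset.mem_univ i)
  choose q hq using hdvd
  refine hnotSOS ⟨k, q, mul_left_cancel₀ (pow_ne_zero 2 hirr.ne_zero) ?_⟩
  simp_rw [hg, hq, mul_pow, Finset.mul_sum]

end
end
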